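/- arXiv:2604.12139 — 4 statements merged into one kernel-verified Lean document; each statement's English description precedes it below -/
import Mathlib

section
/- If Ẽ* ∈ ℝ^{n×(n+1)} satisfies (D − exp(Ẽ* Π̃)) Π̃ᵀ = 0 (the zero matrix, with exp applied entrywise), then Ẽ* is a global maximizer of f, i.e., f(Ẽ) ≤ f(Ẽ*) for every Ẽ ∈ ℝ^{n×(n+1)}. -/
open Matrix

lemma poisson_pointwise (d x y : ℝ) :
    d * x - Real.exp x ≤ d * y - Real.exp y + (d - Real.exp y) * (x - y) := by
  have h := Real.add_one_le_exp (x - y)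
  have h2 := mul_le_mul_of_nonneg_left h (le_of_lt (Real.exp_pos y))
  rw [← Real.exp_add, add_sub_cancel] at h2
  nlinarith

/-- If `(D − exp(Ẽ* Π̃)) Π̃ᵀ = 0`, then `Ẽ*` is a global maximizer of the Poisson
log-likelihood objective `f`. -/
theorem poisson_loglik_global_max_of_grad_zero
    (n N : ℕ) (hn : 0 < n) (hN : 0 < N)
    (D : Matrix (Fin n) (Fin N) ℝ)
    (Pit : Matrix (Fin (n + 1)) (Fin N) ℝ)
    (f : Matrix (Fin n) (Fin (n + 1)) ℝ → ℝ)
    (hf : ∀ E : Matrix (Fin n) (Fin (n + 1)) ℝ,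
      f E = (1 / (N : ℝ)) * ∑ i : Fin n, ∑ j : Fin N,
        (D i j * (E * Pit) i j - Real.exp ((E * Pit) i j)))
    (Estar : Matrix (Fin n) (Fin (n + 1)) ℝ)
    (hstar : (D - (Estar * Pit).map Real.exp) * Pitᵀ = 0) :
    ∀ E : Matrix (Fin n) (Fin (n + 1)) ℝ, f E ≤ f Estar := by
  intro E
  rw [hf, hf]
  have hzero : ∑ i : Fin n, ∑ j : Fin N,
      (D i j - Real.exp ((Estar * Pit) i j)) * ((E * Pit) i j - (Estar * Pit) i j) = 0 := by
    have hrw : ∀ (i : Fin n) (j : Fin N),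
        (D i j - Real.exp ((Estar * Pit) i j)) * ((E * Pit) i j - (Estar * Pit) i j)
        = ∑ k : Fin (n+1),
            (D i j - Real.exp ((Estar * Pit) i j)) * (Pit k j * (E i k - Estar i k)) := by
      intro i j
      rw [← Finset.mul_sum]
      congr 1
      simp only [Matrix.mul_apply, ← Finset.sum_sub_distrib]
      ring_nf
      congr 1
      ext k
      ring
    calc ∑ i : Fin n, ∑ j : Fin N,
        (D i j - Real.exp ((Estar * Pit) i j)) * ((E * Pit) i j - (Estar * Pit) i j)
        = ∑ i : Fin n, ∑ k : Fin (n+1),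
            (((D - (Estar * Pit).map Real.exp) * Pitᵀ) i k) * (E i k - Estar i k) := by
          refine Finset.sum_congr rfl fun i _ => ?_
          rw [Finset.sum_congr rfl fun j _ => hrw i j, Finset.sum_comm]
          refine Finset.sum_congr rfl fun k _ => ?_
          rw [Matrix.mul_apply, Finset.sum_mul]
          refine Finset.sum_congr rfl fun j _ => ?_
          simp [Matrix.sub_apply, Matrix.map_apply, Matrix.transpose_apply]
          ring
      _ = 0 := by rw [hstar]; simp
  have hle : ∑ i : Fin n, ∑ j : Fin N, (D i j * (E * Pit) i j - Real.exp ((E * Pit) i j))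
      ≤ ∑ i : Fin n, ∑ j : Fin N, (D i j * (Estar * Pit) i j - Real.exp ((Estar * Pit) i j)) := by
    calc ∑ i : Fin n, ∑ j : Fin N, (D i j * (E * Pit) i j - Real.exp ((E * Pit) i j))
        ≤ ∑ i : Fin n, ∑ j : Fin N,
            (D i j * (Estar * Pit) i j - Real.exp ((Estar * Pit) i j)
              + (D i j - Real.exp ((Estar * Pit) i j)) * ((E * Pit) i j - (Estar * Pit) i j)) := by
          refine Finset.sum_le_sum fun i _ => Finset.sum_le_sum fun j _ => ?_
          exact poisson_pointwise (D i j) ((E * Pit) i j) ((Estar * Pit) i j)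
      _ = ∑ i : Fin n, ∑ j : Fin N, (D i j * (Estar * Pit) i j - Real.exp ((Estar * Pit) i j)) := by
          simp only [Finset.sum_add_distrib, hzero, add_zero]
  have hNpos : (0:ℝ) ≤ 1 / (N:ℝ) := by positivity
  exact mul_le_mul_of_nonneg_left hle hNpos
end

section
/- For fixed B, C ∈ ℝ^{n×r} and a ∈ ℝⁿ, the map s ↦ f(Ẽ(B,C,s,a)) is Fréchet differentiable at every s ∈ ℝⁿ, with derivative given by the linear map v ↦ Σ_{i=1}^{n} (Δ₁)_{ii} v_i, where Δ₁ ∈ ℝ^{n×n} consists of the first n columns of Δ(Ẽ(B,C,s,a)) = (1/N)(D − exp(Ẽ(B,C,s,a) Π̃)) Π̃ᵀ (exp applied entrywise); i.e., the gradient with respect to s is the diagonal of Δ₁. -/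
open Matrix

/-! The gradient of `E ↦ Σᵢⱼ (Dᵢⱼ (EΠ)ᵢⱼ - exp (EΠ)ᵢⱼ) / N` with respect to the entry `Eᵢₖ` is
`Σⱼ (D - exp (EΠ))ᵢⱼ Πₖⱼ / N = Δᵢₖ`. The parameter `s` enters `Ẽ(B,C,s,a)` only through the
diagonal entries `Ẽᵢᵢ = (BCᵀ)ᵢᵢ + sᵢ`, so by the chain rule the derivative in `s` pairs `v`
with the diagonal `Δᵢᵢ = (Δ₁)ᵢᵢ`. -/

section
variable {X : Type*} [NormedAddCommGroup X] [NormedSpace ℝ X] {m k l : Type*} [Fintype k]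

theorem hasFDerivAt_mul_apply {E : X → Matrix m k ℝ} {E' : m → k → X →L[ℝ] ℝ} {x : X}
    (hE : ∀ i j, HasFDerivAt (fun y => E y i j) (E' i j) x) (P : Matrix k l ℝ) (i : m) (j : l) :
    HasFDerivAt (fun y => (E y * P) i j) (∑ q, P q j • E' i q) x := by
  simp only [mul_apply]
  exact HasFDerivAt.fun_sum fun q _ => (hE i q).mul_const (P q j) |>.congr_fderiv (by ext; simp)

theorem hasFDerivAt_poisson_loglik_comp [Fintype m] [Fintype l] (D : Matrix m l ℝ)
    (P : Matrix k l ℝ) (c : ℝ) {E : X → Matrix m k ℝ} {E' : m → k → X →L[ℝ] ℝ} {x : X}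
    (hE : ∀ i j, HasFDerivAt (fun y => E y i j) (E' i j) x) :
    HasFDerivAt (fun y => c * ∑ i, ∑ j, (D i j * (E y * P) i j - Real.exp ((E y * P) i j)))
      (∑ i, ∑ q, (c • ((D - (E x * P).map Real.exp) * Pᵀ)) i q • E' i q) x := by
  have hterm : ∀ i j, HasFDerivAt (fun y => D i j * (E y * P) i j - Real.exp ((E y * P) i j))
      ((D i j - Real.exp ((E x * P) i j)) • ∑ q, P q j • E' i q) x := fun i j => by
    have hu := hasFDerivAt_mul_apply hE P i j
    exact ((hu.const_mul (D i j)).sub hu.exp).congr_fderiv (sub_smul _ _ _).symm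
  refine ((HasFDerivAt.fun_sum fun i _ => HasFDerivAt.fun_sum fun j _ => hterm i j).const_mul c
    ).congr_fderiv ?_
  simp only [Matrix.smul_apply, mul_apply, Matrix.sub_apply, map_apply, transpose_apply,
    Finset.smul_sum, smul_smul, smul_eq_mul, Finset.mul_sum, Finset.sum_smul]
  exact Finset.sum_congr rfl fun i _ => Finset.sum_comm
end

theorem hasFDerivAt_augmented_diagonal_apply {n : ℕ}
    {E : (Fin n → ℝ) → Matrix (Fin n) (Fin (n + 1)) ℝ} (M : Matrix (Fin n) (Fin n) ℝ)
    (a : Fin n → ℝ) (hcol : ∀ s i j, E s i (Fin.castSucc j) = (M + diagonal s) i j)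
    (hlast : ∀ s i, E s i (Fin.last n) = a i) (s : Fin n → ℝ) (i : Fin n) (j : Fin (n + 1)) :
    HasFDerivAt (fun s0 => E s0 i j)
      (if j = Fin.castSucc i then (ContinuousLinearMap.proj i : (Fin n → ℝ) →L[ℝ] ℝ) else 0) s := by
  induction j using Fin.lastCases with
  | last =>
    simpa only [hlast, if_neg (Fin.castSucc_lt_last i).ne'] using hasFDerivAt_const (a i) s
  | cast k =>
    simp only [hcol, Matrix.add_apply, diagonal_apply, Fin.castSucc_inj]
    by_cases hik : k = i
    · subst hik
      simpa using
        ((ContinuousLinearMap.proj k : (Fin n → ℝ) →L[ℝ] ℝ).hasFDerivAt (x := s)).const_add (M k k)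
    · simpa [hik, Ne.symm hik] using hasFDerivAt_const (M i k) s

theorem loglik_hasFDerivAt_s_general
    (n N r : ℕ)
    (D : Matrix (Fin n) (Fin N) ℝ)
    (Pit : Matrix (Fin (n + 1)) (Fin N) ℝ)
    (f : Matrix (Fin n) (Fin (n + 1)) ℝ → ℝ)
    (hf : ∀ E : Matrix (Fin n) (Fin (n + 1)) ℝ,
      f E = (1 / (N : ℝ)) * ∑ i : Fin n, ∑ j : Fin N,
        (D i j * (E * Pit) i j - Real.exp ((E * Pit) i j)))
    (Etil : Matrix (Fin n) (Fin r) ℝ → Matrix (Fin n) (Fin r) ℝ →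
      (Fin n → ℝ) → (Fin n → ℝ) → Matrix (Fin n) (Fin (n + 1)) ℝ)
    (hEtil : ∀ B C s a,
      (∀ (i : Fin n) (j : Fin n),
        Etil B C s a i (Fin.castSucc j) = (B * Cᵀ + Matrix.diagonal s) i j) ∧
      (∀ i : Fin n, Etil B C s a i (Fin.last n) = a i))
    (B C : Matrix (Fin n) (Fin r) ℝ) (s a : Fin n → ℝ)
    (Δ : Matrix (Fin n) (Fin (n + 1)) ℝ)
    (hΔ : Δ = (1 / (N : ℝ)) • ((D - (Etil B C s a * Pit).map Real.exp) * Pitᵀ))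
    (Δ₁ : Matrix (Fin n) (Fin n) ℝ)
    (hΔ₁ : ∀ (i : Fin n) (j : Fin n), Δ₁ i j = Δ i (Fin.castSucc j))
    (L : (Fin n → ℝ) →L[ℝ] ℝ)
    (hL : ∀ v : Fin n → ℝ, L v = ∑ i : Fin n, Δ₁ i i * v i) :
    HasFDerivAt (fun s0 : Fin n → ℝ => f (Etil B C s0 a)) L s := by
  have hentry := hasFDerivAt_augmented_diagonal_apply (B * Cᵀ) a
    (fun s => (hEtil B C s a).1) (fun s => (hEtil B C s a).2) s
  have hcomp := hasFDerivAt_poisson_loglik_comp D Pit (1 / (N : ℝ)) hentry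
  simp only [← hf, ← hΔ] at hcomp
  refine hcomp.congr_fderiv ?_
  ext v
  simp [hL, hΔ₁]

/-- For fixed `B, C, a`, the map `s ↦ f(Ẽ(B,C,s,a))` is Fréchet differentiable, with
gradient the diagonal of `Δ₁`. -/
theorem loglik_hasFDerivAt_s
    (n N r : ℕ) (hn : 0 < n) (hN : 0 < N) (hr : 0 < r)
    (D : Matrix (Fin n) (Fin N) ℝ)
    (Pit : Matrix (Fin (n + 1)) (Fin N) ℝ)
    (f : Matrix (Fin n) (Fin (n + 1)) ℝ → ℝ)
    (hf : ∀ E : Matrix (Fin n) (Fin (n + 1)) ℝ,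
      f E = (1 / (N : ℝ)) * ∑ i : Fin n, ∑ j : Fin N,
        (D i j * (E * Pit) i j - Real.exp ((E * Pit) i j)))
    (Etil : Matrix (Fin n) (Fin r) ℝ → Matrix (Fin n) (Fin r) ℝ →
      (Fin n → ℝ) → (Fin n → ℝ) → Matrix (Fin n) (Fin (n + 1)) ℝ)
    (hEtil : ∀ B C s a,
      (∀ (i : Fin n) (j : Fin n),
        Etil B C s a i (Fin.castSucc j) = (B * Cᵀ + Matrix.diagonal s) i j) ∧
      (∀ i : Fin n, Etil B C s a i (Fin.last n) = a i))
    (B C : Matrix (Fin n) (Fin r) ℝ) (s a : Fin n → ℝ)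
    (Δ : Matrix (Fin n) (Fin (n + 1)) ℝ)
    (hΔ : Δ = (1 / (N : ℝ)) • ((D - (Etil B C s a * Pit).map Real.exp) * Pitᵀ))
    (Δ₁ : Matrix (Fin n) (Fin n) ℝ)
    (hΔ₁ : ∀ (i : Fin n) (j : Fin n), Δ₁ i j = Δ i (Fin.castSucc j))
    (L : (Fin n → ℝ) →L[ℝ] ℝ)
    (hL : ∀ v : Fin n → ℝ, L v = ∑ i : Fin n, Δ₁ i i * v i) :
    HasFDerivAt (fun s0 : Fin n → ℝ => f (Etil B C s0 a)) L s :=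
  loglik_hasFDerivAt_s_general n N r D Pit f hf Etil hEtil B C s a Δ hΔ Δ₁ hΔ₁ L hL
end

section
/- Let B, C ∈ ℝ^{n×r} and set M = B Cᵀ ∈ ℝ^{n×n}. Then the nuclear norm of M, i.e., the sum Σ_{i=1}^{n} √(μ_i), where μ₁,…,μₙ are the eigenvalues of the real symmetric positive semidefinite matrix Mᵀ M, satisfies Σ_{i=1}^{n} √(μ_i) ≤ (1/2)(‖B‖_F² + ‖C‖_F²). -/
/-!
Let `vᵢ` be the orthonormal eigenvectors of `Mᵀ M`, with eigenvalues `μᵢ`, and `uᵢ = M vᵢ / √μᵢ`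
the left singular vectors, orthonormal over the `i` with `μᵢ ≠ 0`. Then
`√μᵢ = uᵢ ⬝ B Cᵀ vᵢ = (Bᵀ uᵢ) ⬝ (Cᵀ vᵢ) ≤ (‖Bᵀ uᵢ‖² + ‖Cᵀ vᵢ‖²) / 2`, and summing over `i`,
Bessel's inequality for the columns of `B` and of `C` bounds `∑ ‖Bᵀ uᵢ‖²` by `‖B‖_F²` and
`∑ ‖Cᵀ vᵢ‖²` by `‖C‖_F²`.
-/

open Matrix RealInnerProductSpace

lemma dotProduct_mul_transpose_mulVec {m n r : Type*} [Fintype m] [Fintype n] [Fintype r]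
    (B : Matrix m r ℝ) (C : Matrix n r ℝ) (x : m → ℝ) (y : n → ℝ) :
    x ⬝ᵥ (B * Cᵀ) *ᵥ y = (Bᵀ *ᵥ x) ⬝ᵥ (Cᵀ *ᵥ y) := by
  rw [← mulVec_mulVec, dotProduct_mulVec, ← mulVec_transpose]

lemma dotProduct_eq_ite_of_orthonormal {ι m : Type*} [Fintype m] [DecidableEq ι]
    {u : ι → EuclideanSpace ℝ m} (hu : Orthonormal ℝ u) (i j : ι) :
    (u i : m → ℝ) ⬝ᵥ u j = if i = j then 1 else 0 := by
  rw [← orthonormal_iff_ite.mp hu i j, EuclideanSpace.inner_eq_star_dotProduct, star_trivial,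
    dotProduct_comm]

/-- Bessel's inequality applied to the columns of `B`. -/
lemma sum_sq_transpose_mulVec_le {ι m r : Type*} [Fintype ι] [Fintype m] [Fintype r]
    {u : ι → EuclideanSpace ℝ m} (hu : Orthonormal ℝ u) (B : Matrix m r ℝ) :
    ∑ i, ∑ k, (Bᵀ *ᵥ u i) k ^ 2 ≤ ∑ j, ∑ k, B j k ^ 2 := by
  have hcol : ∀ i k, (Bᵀ *ᵥ u i) k = ⟪u i, WithLp.toLp 2 (Bᵀ k)⟫ := fun i k => by
    simp only [EuclideanSpace.inner_eq_star_dotProduct, star_trivial, mulVec, dotProduct_comm]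
  calc ∑ i, ∑ k, (Bᵀ *ᵥ u i) k ^ 2
      = ∑ k, ∑ i, ‖⟪u i, WithLp.toLp 2 (Bᵀ k)⟫‖ ^ 2 := by
        rw [Finset.sum_comm]; simp only [hcol, Real.norm_eq_abs, sq_abs]
    _ ≤ ∑ k, ‖WithLp.toLp 2 (Bᵀ k)‖ ^ 2 :=
        Finset.sum_le_sum fun k _ => hu.sum_inner_products_le _
    _ = ∑ j, ∑ k, B j k ^ 2 := by
        rw [Finset.sum_comm]; simp [EuclideanSpace.norm_sq_eq]

lemma dotProduct_le_half_sum_sq {n : Type*} [Fintype n] (x y : n → ℝ) :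
    x ⬝ᵥ y ≤ 1 / 2 * (∑ k, x k ^ 2 + ∑ k, y k ^ 2) := by
  rw [← Finset.sum_add_distrib, Finset.mul_sum]
  exact Finset.sum_le_sum fun k _ => by nlinarith [two_mul_le_add_sq (x k) (y k)]

lemma sum_sqrt_eq_sum_subtype_ne_zero {n : Type*} [Fintype n] (μ : n → ℝ) :
    ∑ i, √(μ i) = ∑ i : {i // μ i ≠ 0}, √(μ i) := by
  rw [← Finset.sum_filter_of_ne (p := fun i => μ i ≠ 0) fun i _ h hμ => h (by simp [hμ])]
  exact Finset.sum_subtype _ (by simp) _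

namespace Matrix.IsHermitian

variable {m n : Type*} [Fintype m] [Fintype n] [DecidableEq n] {M : Matrix m n ℝ}
  (hH : (Mᵀ * M).IsHermitian)

lemma mulVec_eigenvectorBasis_dotProduct (i j : n) :
    (M *ᵥ hH.eigenvectorBasis i) ⬝ᵥ (M *ᵥ hH.eigenvectorBasis j) =
      if i = j then hH.eigenvalues i else 0 := by
  rw [dotProduct_mulVec, ← mulVec_transpose, mulVec_mulVec, hH.mulVec_eigenvectorBasis,
    smul_dotProduct, dotProduct_eq_ite_of_orthonormal hH.eigenvectorBasis.orthonormal]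
  simp

lemma eigenvalues_nonneg_of_transpose_mul_self (i : n) : 0 ≤ hH.eigenvalues i := by
  simpa [star_trivial, hH.mulVec_eigenvectorBasis_dotProduct] using
    dotProduct_self_star_nonneg (M *ᵥ hH.eigenvectorBasis i)

/-- `M vᵢ / √μᵢ`, which is `0` when `μᵢ = 0` since `0⁻¹ = 0`. -/
noncomputable def leftSingularVector (i : n) : m → ℝ :=
  (√(hH.eigenvalues i))⁻¹ • (M *ᵥ hH.eigenvectorBasis i)

lemma leftSingularVector_dotProduct_mulVec (i : n) :
    hH.leftSingularVector i ⬝ᵥ (M *ᵥ hH.eigenvectorBasis i) = √(hH.eigenvalues i) := by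
  rw [leftSingularVector, smul_dotProduct, mulVec_eigenvectorBasis_dotProduct, if_pos rfl,
    smul_eq_mul, inv_mul_eq_div, Real.div_sqrt]

lemma orthonormal_leftSingularVector :
    Orthonormal ℝ fun i : {i // hH.eigenvalues i ≠ 0} =>
      WithLp.toLp 2 (hH.leftSingularVector i) := by
  rw [orthonormal_iff_ite]
  rintro ⟨i, hi⟩ ⟨j, hj⟩
  simp only [EuclideanSpace.inner_toLp_toLp, star_trivial, leftSingularVector, smul_dotProduct,
    dotProduct_smul, mulVec_eigenvectorBasis_dotProduct, Subtype.mk.injEq, smul_eq_mul]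
  obtain rfl | hij := eq_or_ne i j
  · have hσ : √(hH.eigenvalues i) ≠ 0 :=
      Real.sqrt_ne_zero'.mpr ((hH.eigenvalues_nonneg_of_transpose_mul_self i).lt_of_ne' hi)
    rw [if_pos rfl, if_pos rfl, inv_mul_eq_div _ (hH.eigenvalues i), Real.div_sqrt,
      inv_mul_cancel₀ hσ]
  · simp [hij, hij.symm]

end Matrix.IsHermitian

theorem nuclearNorm_mul_transpose_le_general
    (n r : ℕ)
    (B C : Matrix (Fin n) (Fin r) ℝ)
    (M : Matrix (Fin n) (Fin n) ℝ) (hM : M = B * Cᵀ)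
    (hH : (Mᵀ * M).IsHermitian) :
    ∑ i : Fin n, Real.sqrt (hH.eigenvalues i) ≤
      (1 / 2) * ((∑ i : Fin n, ∑ k : Fin r, (B i k) ^ 2) +
                 (∑ i : Fin n, ∑ k : Fin r, (C i k) ^ 2)) := by
  subst hM
  set u := hH.leftSingularVector
  set v := hH.eigenvectorBasis
  have hσ (i : Fin n) : √(hH.eigenvalues i) = (Bᵀ *ᵥ u i) ⬝ᵥ (Cᵀ *ᵥ v i) := by
    rw [← hH.leftSingularVector_dotProduct_mulVec, dotProduct_mul_transpose_mulVec]
  calc ∑ i, √(hH.eigenvalues i)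
      = ∑ i : {i // hH.eigenvalues i ≠ 0}, √(hH.eigenvalues i) :=
        sum_sqrt_eq_sum_subtype_ne_zero _
    _ ≤ ∑ i : {i // hH.eigenvalues i ≠ 0},
          1 / 2 * (∑ k, (Bᵀ *ᵥ u i) k ^ 2 + ∑ k, (Cᵀ *ᵥ v i) k ^ 2) :=
        Finset.sum_le_sum fun i _ => (hσ i).trans_le (dotProduct_le_half_sum_sq _ _)
    _ = 1 / 2 * (∑ i : {i // hH.eigenvalues i ≠ 0}, ∑ k, (Bᵀ *ᵥ u i) k ^ 2 +
          ∑ i : {i // hH.eigenvalues i ≠ 0}, ∑ k, (Cᵀ *ᵥ v i) k ^ 2) := by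
        rw [← Finset.sum_add_distrib, Finset.mul_sum]
    _ ≤ _ := by
        gcongr
        · exact sum_sq_transpose_mulVec_le hH.orthonormal_leftSingularVector B
        · exact sum_sq_transpose_mulVec_le (v.orthonormal.comp _ Subtype.val_injective) C

/-- The nuclear norm of `M = B Cᵀ` (the sum of the square roots of the eigenvalues
of `Mᵀ M`) is at most `(1/2)(‖B‖_F² + ‖C‖_F²)`. -/
theorem nuclearNorm_mul_transpose_le
    (n r : ℕ) (hn : 0 < n) (hr : 0 < r)
    (B C : Matrix (Fin n) (Fin r) ℝ)
    (M : Matrix (Fin n) (Fin n) ℝ) (hM : M = B * Cᵀ)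
    (hH : (Mᵀ * M).IsHermitian) :
    ∑ i : Fin n, Real.sqrt (hH.eigenvalues i) ≤
      (1 / 2) * ((∑ i : Fin n, ∑ k : Fin r, (B i k) ^ 2) +
                 (∑ i : Fin n, ∑ k : Fin r, (C i k) ^ 2)) :=
  nuclearNorm_mul_transpose_le_general n r B C M hM hH
end

section
/- Assume every entry of D is nonnegative and let λ ≥ 0. Then the supremum over (B, C, s, a) ∈ ℝ^{n×r} × ℝ^{n×r} × ℝⁿ × ℝⁿ of f(Ẽ(B,C,s,a)) − (λ/2)(‖B‖_F² + ‖C‖_F²) equals the supremum over (M, s, a) with M ∈ ℝ^{n×n}, rank(M) ≤ r, s ∈ ℝⁿ, a ∈ ℝⁿ of f(Ẽ'(M,s,a)) − λ·N*(M), where Ẽ'(M,s,a) ∈ ℝ^{n×(n+1)} has first n columns M + diag(s) and last column a, and N*(M) = Σ_{i=1}^{n} √(μ_i) with μ₁,…,μₙ the eigenvalues of Mᵀ M. -/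
/-! Both objectives see the factors only through `M = B Cᵀ`, and at that level the theorem is the
variational formula `‖M‖_* = min {(‖B‖_F² + ‖C‖_F²) / 2 : B Cᵀ = M}` over factors with `r` columns,
valid when `rank M ≤ r`. For an SVD `M = U Σ Vᵀ`,
`tr Σ = tr ((BᵀU)ᵀ (CᵀV)) ≤ (‖BᵀU‖_F² + ‖CᵀV‖_F²) / 2 ≤ (‖B‖_F² + ‖C‖_F²) / 2`,
since `U Uᵀ` is an orthogonal projection and `V` is orthogonal. Conversely `Σ` has at most `r`
nonzero entries, so `Σ = Z Zᵀ` for some `Z` with `r` columns, and `B = U Z`, `C = V Z` attain the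
bound. Thus every value of either objective is dominated by a value of the other. -/

open Matrix

namespace Matrix

variable {m n k : Type*} [Fintype m] [Fintype n] [Fintype k]

lemma sum_sum_sq_eq_trace_transpose_mul_self (B : Matrix m k ℝ) :
    ∑ i, ∑ j, B i j ^ 2 = (Bᵀ * B).trace := by
  simp only [trace, diag, mul_apply, transpose_apply, sq]
  exact Finset.sum_comm

lemma trace_transpose_mul_self_nonneg (B : Matrix m k ℝ) : 0 ≤ (Bᵀ * B).trace := by
  rw [← sum_sum_sq_eq_trace_transpose_mul_self]
  positivity

lemma trace_transpose_mul_le (P Q : Matrix m k ℝ) :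
    (Pᵀ * Q).trace ≤ ((Pᵀ * P).trace + (Qᵀ * Q).trace) / 2 := by
  have hQP : (Qᵀ * P).trace = (Pᵀ * Q).trace := by
    rw [← trace_transpose, transpose_mul, transpose_transpose]
  have h := trace_transpose_mul_self_nonneg (P - Q)
  simp only [transpose_sub, Matrix.sub_mul, Matrix.mul_sub, trace_sub] at h
  linarith

lemma trace_transpose_mul_mul_le_of_isIdempotentElem (B : Matrix m k ℝ) {P : Matrix m m ℝ}
    (hPs : P.IsSymm) (hPP : IsIdempotentElem P) : (Bᵀ * P * B).trace ≤ (Bᵀ * B).trace := by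
  have hPB : (P * B)ᵀ * B = Bᵀ * P * B := by rw [transpose_mul, hPs.eq, Matrix.mul_assoc]
  have hPBPB : (P * B)ᵀ * P * B = Bᵀ * P * B := by
    rw [transpose_mul, hPs.eq, Matrix.mul_assoc Bᵀ P P, hPP.eq]
  have h := trace_transpose_mul_self_nonneg (B - P * B)
  simp only [transpose_sub, Matrix.sub_mul, Matrix.mul_sub, trace_sub, hPB, hPBPB,
    ← Matrix.mul_assoc] at h
  linarith

lemma exists_mul_transpose_eq_diagonal [DecidableEq n] {d : n → ℝ} (hd : ∀ i, 0 ≤ d i)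
    (h : Fintype.card {i // d i ≠ 0} ≤ Fintype.card k) :
    ∃ Z : Matrix n k ℝ, Z * Zᵀ = diagonal d := by
  classical
  obtain ⟨e⟩ := Function.Embedding.nonempty_of_card_le h
  refine ⟨of fun i c => if hi : d i ≠ 0 then √(d i) * (1 : Matrix k k ℝ) (e ⟨i, hi⟩) c else 0, ?_⟩
  ext i i'
  rcases eq_or_ne i i' with rfl | hii'
  · by_cases hi : d i = 0 <;> simp [mul_apply, hi, one_apply, Real.mul_self_sqrt (hd i)]
  · by_cases hi : d i = 0 <;> by_cases hi' : d i' = 0 <;>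
      simp [mul_apply, hi, hi', hii', one_apply, e.injective.eq_iff]

section SingularValueDecomposition

variable [DecidableEq n] {M : Matrix m n ℝ} (hA : (Mᵀ * M).IsHermitian)

/- The singular value decomposition `M = U Σ Vᵀ`, read off the spectral decomposition of `Mᵀ M`.
Since `0⁻¹ = 0`, the columns of `U` belonging to vanishing singular values are zero rather than
unit vectors, so `U` is only a partial isometry. -/

noncomputable def rightSingularVectors : Matrix n n ℝ := hA.eigenvectorUnitary

noncomputable def singularValues : n → ℝ := fun j => √(hA.eigenvalues j)

noncomputable def leftSingularVectors : Matrix m n ℝ :=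
  M * rightSingularVectors hA * diagonal (singularValues hA)⁻¹

local notation "V" => rightSingularVectors hA
local notation "U" => leftSingularVectors hA
local notation "σ" => singularValues hA

lemma star_rightSingularVectors : star V = Vᵀ := by
  rw [star_eq_conjTranspose, conjTranspose_eq_transpose_of_trivial]

lemma rightSingularVectors_transpose_mul_self : Vᵀ * V = 1 := by
  rw [← star_rightSingularVectors]
  exact mem_unitaryGroup_iff'.mp hA.eigenvectorUnitary.2

lemma rightSingularVectors_mul_transpose_self : V * Vᵀ = 1 := by
  rw [← star_rightSingularVectors]
  exact mem_unitaryGroup_iff.mp hA.eigenvectorUnitary.2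

lemma singularValues_mul_self (j : n) : σ j * σ j = hA.eigenvalues j :=
  Real.mul_self_sqrt ((posSemidef_conjTranspose_mul_self M).eigenvalues_nonneg j)

lemma transpose_mul_self_mul_rightSingularVectors :
    (M * V)ᵀ * (M * V) = diagonal fun j => σ j * σ j := by
  have h := hA.conjStarAlgAut_star_eigenvectorUnitary
  rw [Unitary.conjStarAlgAut_star_apply, star_eq_conjTranspose,
    conjTranspose_eq_transpose_of_trivial, RCLike.ofReal_real_eq_id, Function.id_comp] at h
  simp only [singularValues_mul_self, transpose_mul, ← h, rightSingularVectors, Matrix.mul_assoc]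

lemma mul_rightSingularVectors_apply_eq_zero {j : n} (hj : σ j = 0) (i : m) :
    (M * V) i j = 0 := by
  have h := congrFun (congrFun (transpose_mul_self_mul_rightSingularVectors hA) j) j
  rw [diagonal_apply_eq, hj, mul_zero, mul_apply] at h
  simp only [transpose_apply] at h
  exact mul_self_eq_zero.mp <|
    (Finset.sum_eq_zero_iff_of_nonneg fun i _ => mul_self_nonneg _).mp h i (Finset.mem_univ i)

lemma leftSingularVectors_transpose_mul_self :
    Uᵀ * U = diagonal σ * diagonal σ⁻¹ := by
  rw [leftSingularVectors, transpose_mul, diagonal_transpose, Matrix.mul_assoc,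
    ← Matrix.mul_assoc (M * V)ᵀ, transpose_mul_self_mul_rightSingularVectors]
  simp only [diagonal_mul_diagonal, Pi.inv_apply]
  congr 1; ext j
  rw [mul_self_mul_inv, mul_comm]

lemma leftSingularVectors_mul_diagonal : U * diagonal σ = M * V := by
  ext i j
  rw [leftSingularVectors, Matrix.mul_assoc, diagonal_mul_diagonal, mul_diagonal]
  by_cases hj : σ j = 0
  · rw [mul_rightSingularVectors_apply_eq_zero hA hj, zero_mul]
  · rw [Pi.inv_apply, inv_mul_cancel₀ hj, mul_one]

lemma leftSingularVectors_mul_diagonal_mul_transpose : U * diagonal σ * Vᵀ = M := by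
  rw [leftSingularVectors_mul_diagonal, Matrix.mul_assoc, rightSingularVectors_mul_transpose_self,
    Matrix.mul_one]

lemma leftSingularVectors_transpose_mul_mul_rightSingularVectors :
    Uᵀ * M * V = diagonal σ := by
  rw [Matrix.mul_assoc, leftSingularVectors, transpose_mul, diagonal_transpose, Matrix.mul_assoc,
    transpose_mul_self_mul_rightSingularVectors, diagonal_mul_diagonal]
  congr 1; ext j
  rw [Pi.inv_apply, ← mul_assoc, inv_mul_mul_self]

lemma isIdempotentElem_leftSingularVectors_mul_transpose : IsIdempotentElem (U * Uᵀ) := by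
  rw [IsIdempotentElem, Matrix.mul_assoc, ← Matrix.mul_assoc Uᵀ, leftSingularVectors_transpose_mul_self,
    ← Matrix.mul_assoc, ← Matrix.mul_assoc, leftSingularVectors_mul_diagonal, leftSingularVectors,
    Matrix.mul_assoc]

end SingularValueDecomposition

lemma sum_singularValues_mul_transpose_le [DecidableEq n] (B : Matrix m k ℝ) (C : Matrix n k ℝ)
    (hA : ((B * Cᵀ)ᵀ * (B * Cᵀ)).IsHermitian) :
    ∑ j, singularValues hA j ≤ ((Bᵀ * B).trace + (Cᵀ * C).trace) / 2 := by
  set U := leftSingularVectors hA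
  set V := rightSingularVectors hA
  have hsum : ∑ j, singularValues hA j = ((Bᵀ * U)ᵀ * (Cᵀ * V)).trace := by
    rw [← trace_diagonal, ← leftSingularVectors_transpose_mul_mul_rightSingularVectors]
    simp only [U, V, transpose_mul, transpose_transpose, Matrix.mul_assoc]
  have hU : ((Bᵀ * U)ᵀ * (Bᵀ * U)).trace ≤ (Bᵀ * B).trace := by
    rw [trace_mul_comm, transpose_mul, transpose_transpose, ← Matrix.mul_assoc,
      Matrix.mul_assoc Bᵀ]
    exact trace_transpose_mul_mul_le_of_isIdempotentElem B
      (by rw [IsSymm, transpose_mul, transpose_transpose])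
      (isIdempotentElem_leftSingularVectors_mul_transpose hA)
  have hV : ((Cᵀ * V)ᵀ * (Cᵀ * V)).trace = (Cᵀ * C).trace := by
    rw [trace_mul_comm, transpose_mul, transpose_transpose, Matrix.mul_assoc, ← Matrix.mul_assoc V,
      rightSingularVectors_mul_transpose_self, Matrix.one_mul]
  linarith [trace_transpose_mul_le (Bᵀ * U) (Cᵀ * V)]

lemma exists_mul_transpose_eq_of_rank_le [DecidableEq n] {M : Matrix m n ℝ}
    (hA : (Mᵀ * M).IsHermitian) (hrank : M.rank ≤ Fintype.card k) :
    ∃ (B : Matrix m k ℝ) (C : Matrix n k ℝ), B * Cᵀ = M ∧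
      (Bᵀ * B).trace = ∑ j, singularValues hA j ∧ (Cᵀ * C).trace = ∑ j, singularValues hA j := by
  set σ := singularValues hA
  set U := leftSingularVectors hA
  set V := rightSingularVectors hA
  have hcard : Fintype.card {j // σ j ≠ 0} ≤ Fintype.card k := by
    rw [Fintype.card_congr (Equiv.subtypeEquivRight fun j => by
      rw [← mul_self_ne_zero, singularValues_mul_self]), ← hA.rank_eq_card_non_zero_eigs,
      rank_transpose_mul_self]
    exact hrank
  obtain ⟨Z, hZ⟩ : ∃ Z : Matrix n k ℝ, Z * Zᵀ = diagonal σ :=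
    exists_mul_transpose_eq_diagonal (fun j => Real.sqrt_nonneg _) hcard
  refine ⟨U * Z, V * Z, ?_, ?_, ?_⟩
  · rw [transpose_mul, Matrix.mul_assoc, ← Matrix.mul_assoc Z, hZ, ← Matrix.mul_assoc,
      leftSingularVectors_mul_diagonal_mul_transpose]
  · rw [trace_mul_comm, transpose_mul, Matrix.mul_assoc, ← Matrix.mul_assoc Z, hZ, trace_mul_comm,
      Matrix.mul_assoc, leftSingularVectors_transpose_mul_self, diagonal_mul_diagonal,
      diagonal_mul_diagonal, trace_diagonal]
    exact Finset.sum_congr rfl fun j _ => by rw [Pi.inv_apply, ← mul_assoc, mul_self_mul_inv]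
  · rw [trace_mul_comm, transpose_mul, Matrix.mul_assoc, ← Matrix.mul_assoc Z, hZ, trace_mul_comm,
      Matrix.mul_assoc, rightSingularVectors_transpose_mul_self, Matrix.mul_one, trace_diagonal]

end Matrix

theorem factored_reg_sup_eq_nuclear_reg_sup_general
    (n r : ℕ)
    (f : Matrix (Fin n) (Fin (n + 1)) ℝ → ℝ)
    (Etil : Matrix (Fin n) (Fin r) ℝ → Matrix (Fin n) (Fin r) ℝ →
      (Fin n → ℝ) → (Fin n → ℝ) → Matrix (Fin n) (Fin (n + 1)) ℝ)
    (hEtil : ∀ B C s a,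
      (∀ (i : Fin n) (j : Fin n),
        Etil B C s a i (Fin.castSucc j) = (B * Cᵀ + Matrix.diagonal s) i j) ∧
      (∀ i : Fin n, Etil B C s a i (Fin.last n) = a i))
    (Etil' : Matrix (Fin n) (Fin n) ℝ →
      (Fin n → ℝ) → (Fin n → ℝ) → Matrix (Fin n) (Fin (n + 1)) ℝ)
    (hEtil' : ∀ M s a,
      (∀ (i : Fin n) (j : Fin n),
        Etil' M s a i (Fin.castSucc j) = (M + Matrix.diagonal s) i j) ∧
      (∀ i : Fin n, Etil' M s a i (Fin.last n) = a i))
    (hH : ∀ M : Matrix (Fin n) (Fin n) ℝ, (Mᵀ * M).IsHermitian)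
    (lam : ℝ) (hlam : 0 ≤ lam) :
    sSup {x : ℝ | ∃ (B C : Matrix (Fin n) (Fin r) ℝ) (s a : Fin n → ℝ),
        x = f (Etil B C s a) -
          (lam / 2) * ((∑ i : Fin n, ∑ k : Fin r, (B i k) ^ 2) +
                       (∑ i : Fin n, ∑ k : Fin r, (C i k) ^ 2))} =
    sSup {x : ℝ | ∃ (M : Matrix (Fin n) (Fin n) ℝ) (s a : Fin n → ℝ),
        M.rank ≤ r ∧
        x = f (Etil' M s a) - lam * ∑ i : Fin n, Real.sqrt ((hH M).eigenvalues i)} := by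
  have hE : ∀ B C s a, Etil B C s a = Etil' (B * Cᵀ) s a := fun B C s a => by
    ext i j
    refine Fin.lastCases ?_ (fun j => ?_) j
    · rw [(hEtil B C s a).2, (hEtil' _ s a).2]
    · rw [(hEtil B C s a).1, (hEtil' _ s a).1]
  simp only [sum_sum_sq_eq_trace_transpose_mul_self]
  apply csSup_eq_csSup_of_forall_exists_le
  · rintro _ ⟨B, C, s, a, rfl⟩
    have hrank : (B * Cᵀ).rank ≤ r :=
      (rank_mul_le_left B Cᵀ).trans ((rank_le_card_width B).trans (Fintype.card_fin r).le)
    refine ⟨_, ⟨B * Cᵀ, s, a, hrank, rfl⟩, ?_⟩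
    have hnuc := mul_le_mul_of_nonneg_left (sum_singularValues_mul_transpose_le B C (hH _)) hlam
    rw [hE]
    unfold singularValues at hnuc
    linarith
  · rintro _ ⟨M, s, a, hrank, rfl⟩
    obtain ⟨B, C, rfl, hB, hC⟩ :=
      exists_mul_transpose_eq_of_rank_le (k := Fin r) (hH M) (by simpa using hrank)
    refine ⟨_, ⟨B, C, s, a, rfl⟩, le_of_eq ?_⟩
    rw [hE, hB, hC]
    unfold singularValues
    ring

/-- With `D` entrywise nonnegative and `λ ≥ 0`, the supremum of the factored, Frobenius-
regularized problem over `(B, C, s, a)` equals the supremum of the rank-constrained,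
nuclear-norm-regularized problem over `(M, s, a)` with `rank M ≤ r`. -/
theorem factored_reg_sup_eq_nuclear_reg_sup
    (n N r : ℕ) (hn : 0 < n) (hN : 0 < N) (hr : 0 < r)
    (D : Matrix (Fin n) (Fin N) ℝ)
    (hD : ∀ i j, 0 ≤ D i j)
    (Pit : Matrix (Fin (n + 1)) (Fin N) ℝ)
    (f : Matrix (Fin n) (Fin (n + 1)) ℝ → ℝ)
    (hf : ∀ E : Matrix (Fin n) (Fin (n + 1)) ℝ,
      f E = (1 / (N : ℝ)) * ∑ i : Fin n, ∑ j : Fin N,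
        (D i j * (E * Pit) i j - Real.exp ((E * Pit) i j)))
    (Etil : Matrix (Fin n) (Fin r) ℝ → Matrix (Fin n) (Fin r) ℝ →
      (Fin n → ℝ) → (Fin n → ℝ) → Matrix (Fin n) (Fin (n + 1)) ℝ)
    (hEtil : ∀ B C s a,
      (∀ (i : Fin n) (j : Fin n),
        Etil B C s a i (Fin.castSucc j) = (B * Cᵀ + Matrix.diagonal s) i j) ∧
      (∀ i : Fin n, Etil B C s a i (Fin.last n) = a i))
    (Etil' : Matrix (Fin n) (Fin n) ℝ →
      (Fin n → ℝ) → (Fin n → ℝ) → Matrix (Fin n) (Fin (n + 1)) ℝ)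
    (hEtil' : ∀ M s a,
      (∀ (i : Fin n) (j : Fin n),
        Etil' M s a i (Fin.castSucc j) = (M + Matrix.diagonal s) i j) ∧
      (∀ i : Fin n, Etil' M s a i (Fin.last n) = a i))
    (hH : ∀ M : Matrix (Fin n) (Fin n) ℝ, (Mᵀ * M).IsHermitian)
    (lam : ℝ) (hlam : 0 ≤ lam) :
    sSup {x : ℝ | ∃ (B C : Matrix (Fin n) (Fin r) ℝ) (s a : Fin n → ℝ),
        x = f (Etil B C s a) -
          (lam / 2) * ((∑ i : Fin n, ∑ k : Fin r, (B i k) ^ 2) +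
                       (∑ i : Fin n, ∑ k : Fin r, (C i k) ^ 2))} =
    sSup {x : ℝ | ∃ (M : Matrix (Fin n) (Fin n) ℝ) (s a : Fin n → ℝ),
        M.rank ≤ r ∧
        x = f (Etil' M s a) - lam * ∑ i : Fin n, Real.sqrt ((hH M).eigenvalues i)} :=
  factored_reg_sup_eq_nuclear_reg_sup_general n r f Etil hEtil Etil' hEtil' hH lam hlam
end
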